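/- Let d ≥ 1, k ≥ 1, and let t₁, …, t_{2k+2} ∈ ℤ^d be an O_k-configuration that is not ℓ1-isometric to O_k. Then there exists a point t ∈ ℤ^d such that ‖t − t_i‖_∞ = 1 for every index i. -/

import Mathlib

/-! An `O_k`-configuration with `k ≥ 1` has at least three points, so any two of its points have a
common neighbour among the others; hence all its pairwise `ℓ∞` distances are at most `2`, and in
every coordinate the points take values in `{a, a + 1, a + 2}` with `a` the coordinatewise minimum.
The point `a + 1` is then at distance at most `1` from every `t_i`, and exactly `1`, because `t_i`
is at distance `2` from the point it is not adjacent to: in some coordinate the two take the values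
`a` and `a + 2`. -/

/-- The `ℓ∞` distance between two points of `ℤ^d`, as a natural number. -/
def linfDist {d : ℕ} (x y : Fin d → ℤ) : ℕ :=
  Finset.univ.sup fun i => (x i - y i).natAbs

/-- The `ℓ1` distance between two points of `ℤ^d`, as a natural number. -/
def l1Dist {d : ℕ} (x y : Fin d → ℤ) : ℕ :=
  ∑ i, (x i - y i).natAbs

/-- A family of `2k+2` distinct points of `ℤ^d` is an `O_k`-configuration if, in the graph on the
indices with an edge exactly when the `ℓ∞` distance is `1`, every index is adjacent to all others
except exactly one. -/
def IsOkConfig (d k : ℕ) (t : Fin (2 * k + 2) → Fin d → ℤ) : Prop :=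
  Function.Injective t ∧
    ∀ i : Fin (2 * k + 2), ∃! i' : Fin (2 * k + 2), i' ≠ i ∧ linfDist (t i) (t i') ≠ 1

open Finset

lemma linfDist_comm {d : ℕ} (x y : Fin d → ℤ) : linfDist x y = linfDist y x :=
  Finset.sup_congr rfl fun m _ => by omega

lemma natAbs_sub_le_linfDist {d : ℕ} (x y : Fin d → ℤ) (m : Fin d) :
    (x m - y m).natAbs ≤ linfDist x y :=
  le_sup (f := fun m => (x m - y m).natAbs) (mem_univ m)

lemma linfDist_le_iff {d : ℕ} {x y : Fin d → ℤ} {n : ℕ} :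
    linfDist x y ≤ n ↔ ∀ m, (x m - y m).natAbs ≤ n := by
  simp [linfDist]

lemma one_lt_linfDist_iff {d : ℕ} {x y : Fin d → ℤ} :
    1 < linfDist x y ↔ ∃ m, 1 < (x m - y m).natAbs := by
  simp [linfDist, Finset.lt_sup_iff]

lemma linfDist_eq_zero_iff {d : ℕ} {x y : Fin d → ℤ} : linfDist x y = 0 ↔ x = y := by
  rw [← Nat.le_zero, linfDist_le_iff, funext_iff]
  exact forall_congr' fun m => by omega

lemma linfDist_triangle {d : ℕ} (x y z : Fin d → ℤ) :
    linfDist x z ≤ linfDist x y + linfDist y z :=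
  linfDist_le_iff.2 fun m => by
    have := natAbs_sub_le_linfDist x y m
    have := natAbs_sub_le_linfDist y z m
    omega

lemma exists_ne_ne_of_two_lt_card {ι : Type*} [Fintype ι] [DecidableEq ι]
    (h : 2 < Fintype.card ι) (i j : ι) : ∃ c, c ≠ i ∧ c ≠ j := by
  obtain ⟨c, -, hc⟩ := exists_mem_notMem_of_card_lt_card (s := {i, j}) (t := univ)
    ((card_le_two).trans_lt h)
  simp only [mem_insert, mem_singleton, not_or] at hc
  exact ⟨c, hc⟩

section BoxCenter

variable {ι : Type*} [Fintype ι] [Nonempty ι]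

lemma natAbs_inf'_add_one_sub_le (x : ι → ℤ) (hx : ∀ i j, (x i - x j).natAbs ≤ 2) (i : ι) :
    (univ.inf' univ_nonempty x + 1 - x i).natAbs ≤ 1 := by
  obtain ⟨i₀, -, hi₀⟩ := exists_mem_eq_inf' univ_nonempty x
  have := inf'_le x (mem_univ i)
  have := hx i i₀
  omega

lemma natAbs_inf'_add_one_sub_eq_one (x : ι → ℤ) (hx : ∀ i j, (x i - x j).natAbs ≤ 2)
    {i j : ι} (hij : 2 ≤ (x i - x j).natAbs) :
    (univ.inf' univ_nonempty x + 1 - x i).natAbs = 1 := by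
  obtain ⟨i₀, -, hi₀⟩ := exists_mem_eq_inf' univ_nonempty x
  have := inf'_le x (mem_univ i)
  have := inf'_le x (mem_univ j)
  have := hx i i₀
  have := hx j i₀
  omega

/-- The centre of the bounding box of `t` when all of its sides have length `2`. -/
def boxCenter {d : ℕ} (t : ι → Fin d → ℤ) : Fin d → ℤ :=
  fun m => univ.inf' univ_nonempty (fun j => t j m) + 1

lemma linfDist_boxCenter_eq_one {d : ℕ} {t : ι → Fin d → ℤ}
    (ht : ∀ i j, linfDist (t i) (t j) ≤ 2) {i j : ι} (hij : 2 ≤ linfDist (t i) (t j)) :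
    linfDist (boxCenter t) (t i) = 1 := by
  have hcoord : ∀ m, ∀ i j, (t i m - t j m).natAbs ≤ 2 := fun m i j =>
    linfDist_le_iff.1 (ht i j) m
  refine le_antisymm (linfDist_le_iff.2 fun m => ?_) ?_
  · exact natAbs_inf'_add_one_sub_le (fun j => t j m) (hcoord m) i
  · obtain ⟨m, hm⟩ := one_lt_linfDist_iff.1 hij
    exact (natAbs_inf'_add_one_sub_eq_one (fun j => t j m) (hcoord m) hm).symm.trans_le
      (natAbs_sub_le_linfDist (boxCenter t) (t i) m)

end BoxCenter

namespace IsOkConfig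

variable {d k : ℕ} {t : Fin (2 * k + 2) → Fin d → ℤ}

lemma two_le_linfDist_of_ne_one (h : IsOkConfig d k t) {i j : Fin (2 * k + 2)} (hji : j ≠ i)
    (hij : linfDist (t i) (t j) ≠ 1) : 2 ≤ linfDist (t i) (t j) := by
  have : linfDist (t i) (t j) ≠ 0 := fun h0 => hji (h.1 (linfDist_eq_zero_iff.1 h0)).symm
  omega

lemma exists_two_le_linfDist (h : IsOkConfig d k t) (i : Fin (2 * k + 2)) :
    ∃ j, 2 ≤ linfDist (t i) (t j) := by
  obtain ⟨j, ⟨hji, hij⟩, -⟩ := h.2 i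
  exact ⟨j, h.two_le_linfDist_of_ne_one hji hij⟩

lemma linfDist_eq_one_of_ne (h : IsOkConfig d k t) {i j c : Fin (2 * k + 2)} (hji : j ≠ i)
    (hij : linfDist (t i) (t j) ≠ 1) (hci : c ≠ i) (hcj : c ≠ j) : linfDist (t i) (t c) = 1 := by
  by_contra hic
  exact hcj ((h.2 i).unique ⟨hci, hic⟩ ⟨hji, hij⟩)

lemma linfDist_le_two (h : IsOkConfig d k t) (hk : 1 ≤ k) (i j : Fin (2 * k + 2)) :
    linfDist (t i) (t j) ≤ 2 := by
  by_cases hji : j = i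
  · simp [hji, linfDist_eq_zero_iff.2]
  by_cases hij : linfDist (t i) (t j) = 1
  · omega
  obtain ⟨c, hci, hcj⟩ := exists_ne_ne_of_two_lt_card (by simp only [Fintype.card_fin]; omega) i j
  calc linfDist (t i) (t j) ≤ linfDist (t i) (t c) + linfDist (t c) (t j) :=
        linfDist_triangle _ _ _
    _ = 2 := by
        rw [h.linfDist_eq_one_of_ne hji hij hci hcj, linfDist_comm,
          h.linfDist_eq_one_of_ne (Ne.symm hji) (linfDist_comm (t i) (t j) ▸ hij) hcj hci]

end IsOkConfig

theorem okConfig_not_isometric_common_neighbor_general (d k : ℕ) (hk : 1 ≤ k)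
    (ts : Fin (2 * k + 2) → Fin d → ℤ) (ht : IsOkConfig d k ts) :
    ∃ t : Fin d → ℤ, ∀ i : Fin (2 * k + 2), linfDist t (ts i) = 1 := by
  refine ⟨boxCenter ts, fun i => ?_⟩
  obtain ⟨j, hj⟩ := ht.exists_two_le_linfDist i
  exact linfDist_boxCenter_eq_one (ht.linfDist_le_two hk) hj

/-- If an `O_k`-configuration is not `ℓ1`-isometric to `O_k`, then there is a
point of `ℤ^d` at `ℓ∞` distance exactly `1` from every point of the configuration. -/
theorem okConfig_not_isometric_common_neighbor (d k : ℕ) (hd : 1 ≤ d) (hk : 1 ≤ k)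
    (ts : Fin (2 * k + 2) → Fin d → ℤ) (ht : IsOkConfig d k ts)
    (hnotiso : ¬ ∀ i j : Fin (2 * k + 2), i ≠ j → l1Dist (ts i) (ts j) = 2) :
    ∃ t : Fin d → ℤ, ∀ i : Fin (2 * k + 2), linfDist t (ts i) = 1 :=
  okConfig_not_isometric_common_neighbor_general d k hk ts ht
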